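/- Marginal integral fluctuation relation in operator form (Theorem 'ift1', λ(Q) = 0): the tilted operator evaluated at the effective affinity annihilates the stalling state, i.e. M Q *ᵥ p = 0; in particular 0 is an eigenvalue of the tilted operator M Q with strictly positive eigenvector p. -/
import Mathlib


open Matrix

/-- Marginal integral fluctuation relation in operator form (Theorem "ift1"):
the tilted operator evaluated at the effective affinity annihilates the stalling state. -/
theorem marginal_IFR_operator {n : ℕ} (hn : 3 ≤ n)
    (W Whid : Matrix (Fin n) (Fin n) ℝ)
    (hW1 : ∀ i j, i ≠ j → 0 ≤ W i j)
    (hW2 : ∀ j, ∑ i, W i j = 0)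
    (a b : Fin n) (hab : a ≠ b)
    (hWab : 0 < W a b) (hWba : 0 < W b a)
    (hH1 : Whid a b = 0) (hH2 : Whid b a = 0)
    (hH3 : Whid a a = W a a + W b a)
    (hH4 : Whid b b = W b b + W a b)
    (hH5 : ∀ i j, ¬(i = a ∧ j = b) → ¬(i = b ∧ j = a) → ¬(i = a ∧ j = a) →
      ¬(i = b ∧ j = b) → Whid i j = W i j)
    (p : Fin n → ℝ) (hp1 : ∀ i, 0 < p i) (hp2 : ∑ i, p i = 1)
    (hp3 : Whid *ᵥ p = 0)
    (Q : ℝ) (hQdef : Q = Real.log (W a b * p b / (W b a * p a)))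
    (M : ℝ → Matrix (Fin n) (Fin n) ℝ)
    (hM1 : ∀ q, M q a b = W a b * Real.exp (-q))
    (hM2 : ∀ q, M q b a = W b a * Real.exp q)
    (hM3 : ∀ q i j, ¬(i = a ∧ j = b) → ¬(i = b ∧ j = a) → M q i j = W i j) :
    M Q *ᵥ p = 0 := by
  have hx : 0 < W a b * p b / (W b a * p a) := div_pos (mul_pos hWab (hp1 b)) (mul_pos hWba (hp1 a))
  have heQ : Real.exp Q = W a b * p b / (W b a * p a) := by
    rw [hQdef]; exact Real.exp_log hx
  have heQ' : Real.exp (-Q) = W b a * p a / (W a b * p b) := by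
    rw [Real.exp_neg, heQ, inv_div]
  have hpa := (hp1 a).ne'
  have hpb := (hp1 b).ne'
  funext i
  have hhid : ∑ j, Whid i j * p j = 0 := by
    have := congrFun hp3 i
    simpa [Matrix.mulVec, dotProduct] using this
  have key : ∑ j, (M Q i j - Whid i j) * p j = 0 := by
    by_cases hia : i = a
    · subst hia
      have hz : ∀ j ∈ (Finset.univ : Finset (Fin n)), j ∉ ({i, b} : Finset (Fin n)) →
          (M Q i j - Whid i j) * p j = 0 := by
        intro j _ hj
        simp only [Finset.mem_insert, Finset.mem_singleton, not_or] at hj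
        rw [hM3 Q i j (by tauto) (by tauto), hH5 i j (by tauto) (by tauto) (by tauto) (by tauto)]
        ring
      rw [← Finset.sum_subset (Finset.subset_univ {i, b}) hz, Finset.sum_pair hab,
        hM3 Q i i (by tauto) (by tauto), hH3, hM1, hH1, heQ']
      field_simp
      ring
    · by_cases hib : i = b
      · subst hib
        have hz : ∀ j ∈ (Finset.univ : Finset (Fin n)), j ∉ ({a, i} : Finset (Fin n)) →
            (M Q i j - Whid i j) * p j = 0 := by
          intro j _ hj
          simp only [Finset.mem_insert, Finset.mem_singleton, not_or] at hj
          rw [hM3 Q i j (by tauto) (by tauto), hH5 i j (by tauto) (by tauto) (by tauto) (by tauto)]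
          ring
        rw [← Finset.sum_subset (Finset.subset_univ {a, i}) hz, Finset.sum_pair hab,
          hM3 Q i i (by tauto) (by tauto), hH4, hM2, hH2, heQ]
        field_simp
        ring
      · apply Finset.sum_eq_zero
        intro j _
        rw [hM3 Q i j (by tauto) (by tauto), hH5 i j (by tauto) (by tauto) (by tauto) (by tauto)]
        ring
  have : ∑ j, M Q i j * p j = 0 := by
    have hsplit : ∑ j, M Q i j * p j
        = ∑ j, (M Q i j - Whid i j) * p j + ∑ j, Whid i j * p j := by
      rw [← Finset.sum_add_distrib]
      apply Finset.sum_congr rfl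
      intro j _
      ring
    rw [hsplit, key, hhid, add_zero]
  simpa [Matrix.mulVec, dotProduct] using this
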